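/- arXiv:1208.5232 — 3 statements merged into one kernel-verified Lean document; each statement's English description precedes it below -/
import Mathlib

section
/- Let A be a unital C*-algebra, α : A → A a *-endomorphism, and J a closed ideal of A. Let J_∞ be the closure of the union of the ideals J_n defined by J₀ = {0}, J_{n+1} = {a ∈ J : α(a) ∈ J_n}. Then J_∞ = {a ∈ A : α^n(a) ∈ J for all n ∈ ℕ and lim_{n→∞} α^n(a) = 0}, and J_∞ is the largest α-invariant closed ideal contained in J ∩ {a : lim_n α^n(a) = 0}. -/
/-!
Let `S = {a | αⁿ a ∈ J for all n, αⁿ a → 0}`. It is a two-sided ideal, visibly `α`-invariant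
and the largest invariant ideal inside `J ∩ {a | αⁿ a → 0}`, and it is closed because `J` is
and the iterates of the contractive map `α` are equicontinuous; since every `J_n` lies in `S`,
so does the closure of their union. Conversely, for `a ∈ S` and `ε > 0` choose `n` with
`‖αⁿ a‖² < ε` and cut `a` off by functional calculus: `b = a · h(a⋆a)`, with `h` continuous,
zero on `[-ε, ε]` and one outside `[-2ε, 2ε]`. Functional calculus commutes with `α`, so
`αᵏ b = αᵏ a · h((αᵏ a)⋆ αᵏ a) ∈ J` for all `k` and `αⁿ b = 0`, i.e. `b ∈ J_n`, while
`‖a - b‖² = ‖(1 - h)(a⋆a) · a⋆a · (1 - h)(a⋆a)‖ ≤ 2ε`.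
-/

open Filter Topology
open scoped CStarAlgebra

/-- The sequence of ideals `J₀ = {0}`, `J_{n+1} = {a ∈ J : α(a) ∈ J_n}`. -/
def reductionSeq {A : Type*} [CStarAlgebra A] (α : A →⋆ₐ[ℂ] A) (J : Set A) :
    ℕ → Set A
  | 0 => {0}
  | n + 1 => {a ∈ J | α a ∈ reductionSeq α J n}

noncomputable section

def cutoffFun (ε t : ℝ) : ℝ := min 1 (max 0 (|t| / ε - 1))

@[fun_prop]
lemma continuous_cutoffFun (ε : ℝ) : Continuous (cutoffFun ε) := by
  unfold cutoffFun; fun_prop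

lemma cutoffFun_eq_zero {ε t : ℝ} (hε : 0 ≤ ε) (ht : |t| ≤ ε) : cutoffFun ε t = 0 := by
  have : |t| / ε - 1 ≤ 0 := by linarith [div_le_one_of_le₀ ht hε]
  simp [cutoffFun, max_eq_left this]

lemma abs_mul_one_sub_cutoffFun_sq_le {ε : ℝ} (hε : 0 < ε) (t : ℝ) :
    |t| * (1 - cutoffFun ε t) ^ 2 ≤ 2 * ε := by
  rcases le_or_gt (2 * ε) |t| with hbig | hsmall
  · have : 1 ≤ |t| / ε - 1 := by rw [le_sub_iff_add_le, le_div_iff₀ hε]; linarith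
    simp [cutoffFun, min_eq_left (le_max_of_le_right this), hε.le]
  · have h0 : 0 ≤ cutoffFun ε t := le_min zero_le_one (le_max_left _ _)
    have h1 : cutoffFun ε t ≤ 1 := min_le_left _ _
    have : (1 - cutoffFun ε t) ^ 2 ≤ 1 := by nlinarith
    nlinarith [abs_nonneg t]

section Cutoff

variable {A : Type*} [CStarAlgebra A]

def cutoff (ε : ℝ) (a : A) : A := a * cfc (cutoffFun ε) (star a * a)

lemma map_cutoff {B : Type*} [CStarAlgebra B] (φ : A →⋆ₐ[ℂ] B) (ε : ℝ) (a : A) :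
    φ (cutoff ε a) = cutoff ε (φ a) := by
  have hφ : φ (star a * a) = star (φ a) * φ a := by rw [map_mul, map_star]
  rw [cutoff, cutoff, map_mul, StarAlgHom.map_cfc φ (cutoffFun ε) (star a * a)
    (hφa := by rw [hφ]; exact .star_mul_self (φ a)), hφ]

lemma cutoff_eq_zero {ε : ℝ} (hε : 0 ≤ ε) {a : A} (ha : ‖a‖ ^ 2 ≤ ε) : cutoff ε a = 0 := by
  nontriviality A
  have hspec : (spectrum ℝ (star a * a)).EqOn (cutoffFun ε) 0 := fun t ht => by
    refine cutoffFun_eq_zero hε ?_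
    calc |t| = ‖t‖ := (Real.norm_eq_abs t).symm
      _ ≤ ‖star a * a‖ := spectrum.norm_le_norm_of_mem ht
      _ ≤ ε := by rwa [CStarRing.norm_star_mul_self, ← sq]
  rw [cutoff, cfc_congr hspec, cfc_zero ℝ, mul_zero]

lemma norm_sub_cutoff_sq_le {ε : ℝ} (hε : 0 < ε) (a : A) : ‖a - cutoff ε a‖ ^ 2 ≤ 2 * ε := by
  set y := star a * a
  set g : ℝ → ℝ := fun t => 1 - cutoffFun ε t
  have hsub : a - cutoff ε a = a * cfc g y := by
    rw [cutoff, cfc_sub (fun _ => 1) (cutoffFun ε) y, cfc_const_one ℝ y, mul_sub, mul_one]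
  have hg : IsSelfAdjoint (cfc g y) := cfc_predicate g y
  have hprod : star (a * cfc g y) * (a * cfc g y) = cfc (fun t => g t * t * g t) y := by
    rw [cfc_mul (fun t => g t * t) g y, cfc_mul g (fun t => t) y, cfc_id' ℝ y, star_mul,
      hg.star_eq, mul_assoc, mul_assoc, ← mul_assoc (star a)]
  rw [sq, ← CStarRing.norm_star_mul_self, hsub, hprod]
  refine norm_cfc_le (by positivity) fun t _ => ?_
  calc ‖g t * t * g t‖ = |t| * (1 - cutoffFun ε t) ^ 2 := by
        rw [Real.norm_eq_abs, show g t * t * g t = t * (1 - cutoffFun ε t) ^ 2 by ring, abs_mul,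
          abs_sq]
    _ ≤ 2 * ε := abs_mul_one_sub_cutoffFun_sq_le hε t

end Cutoff

section Orbit

variable {A : Type*} [CStarAlgebra A] (α : A →⋆ₐ[ℂ] A)

lemma lipschitzWith_one_iterate (n : ℕ) : LipschitzWith 1 (⇑α)^[n] := by
  simpa using (AddMonoidHomClass.lipschitz_of_bound_nnnorm α 1 fun a => by
    simpa using NonUnitalStarAlgHom.nnnorm_apply_le α a).iterate n

lemma norm_iterate_apply_le (n : ℕ) (a : A) : ‖(⇑α)^[n] a‖ ≤ ‖a‖ := by
  simpa using (lipschitzWith_one_iterate α n).norm_le_mul (iterate_map_zero α n) a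

lemma isClosed_setOf_tendsto_iterate_zero :
    IsClosed {a : A | Tendsto (fun n => (⇑α)^[n] a) atTop (𝓝 0)} :=
  (LipschitzWith.uniformEquicontinuous _ 1 (lipschitzWith_one_iterate α)).equicontinuous
    |>.isClosed_setOfPred_tendsto continuous_const

lemma isBoundedUnder_norm_iterate (a : A) :
    IsBoundedUnder (· ≤ ·) atTop (norm ∘ fun n => (⇑α)^[n] a) :=
  isBoundedUnder_of ⟨‖a‖, (norm_iterate_apply_le α · a)⟩

def orbitNullIdeal (J : TwoSidedIdeal A) : TwoSidedIdeal A :=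
  .mk' {a | (∀ n, (⇑α)^[n] a ∈ J) ∧ Tendsto (fun n => (⇑α)^[n] a) atTop (𝓝 0)}
    ⟨fun n => by simp [J.zero_mem], by simp⟩
    (fun hx hy => ⟨fun n => by simpa using J.add_mem (hx.1 n) (hy.1 n),
      by simpa using hx.2.add hy.2⟩)
    (fun hx => ⟨fun n => by simpa using J.neg_mem (hx.1 n), by simpa using hx.2.neg⟩)
    (fun {x _} hy => ⟨fun n => by simpa using J.mul_mem_left _ _ (hy.1 n),
      by simpa using isBoundedUnder_le_mul_tendsto_zero (isBoundedUnder_norm_iterate α x) hy.2⟩)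
    (fun {_ y} hx => ⟨fun n => by simpa using J.mul_mem_right _ _ (hx.1 n),
      by simpa using hx.2.zero_mul_isBoundedUnder_le (isBoundedUnder_norm_iterate α y)⟩)

variable {α} {J : TwoSidedIdeal A}

lemma coe_orbitNullIdeal : (orbitNullIdeal α J : Set A) =
    {a | (∀ n, (⇑α)^[n] a ∈ J) ∧ Tendsto (fun n => (⇑α)^[n] a) atTop (𝓝 0)} :=
  TwoSidedIdeal.coe_mk' ..

lemma mem_orbitNullIdeal {a : A} :
    a ∈ orbitNullIdeal α J ↔
      (∀ n, (⇑α)^[n] a ∈ J) ∧ Tendsto (fun n => (⇑α)^[n] a) atTop (𝓝 0) :=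
  TwoSidedIdeal.mem_mk' ..

lemma isClosed_orbitNullIdeal (hJ : IsClosed (J : Set A)) :
    IsClosed (orbitNullIdeal α J : Set A) := by
  rw [coe_orbitNullIdeal, Set.ofPred_and, Set.ofPred_forall]
  exact (isClosed_iInter fun n => hJ.preimage ((map_continuous α).iterate n)).inter
    (isClosed_setOf_tendsto_iterate_zero α)

lemma map_mem_orbitNullIdeal {a : A} (ha : a ∈ orbitNullIdeal α J) :
    α a ∈ orbitNullIdeal α J := by
  rw [mem_orbitNullIdeal] at ha ⊢
  simp_rw [← Function.iterate_succ_apply]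
  exact ⟨fun n => ha.1 (n + 1), ha.2.comp (tendsto_add_atTop_nat 1)⟩

lemma le_orbitNullIdeal {K : TwoSidedIdeal A} (hK : ∀ a ∈ K, α a ∈ K)
    (hKJ : K ≤ J) (hK0 : ∀ a ∈ K, Tendsto (fun n => (⇑α)^[n] a) atTop (𝓝 0)) :
    K ≤ orbitNullIdeal α J := fun a ha =>
  mem_orbitNullIdeal.2 ⟨fun n => hKJ (Function.Iterate.rec (· ∈ K) ha hK n), hK0 a ha⟩

end Orbit

section Reduction

variable {A : Type*} [CStarAlgebra A] {α : A →⋆ₐ[ℂ] A}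

lemma mem_reductionSeq_iff {J : Set A} {n : ℕ} {a : A} :
    a ∈ reductionSeq α J n ↔ (∀ k < n, (⇑α)^[k] a ∈ J) ∧ (⇑α)^[n] a = 0 := by
  induction n generalizing a with
  | zero => simp [reductionSeq]
  | succ n ih =>
    simp only [reductionSeq, Set.mem_ofPred_eq, ih, Nat.forall_lt_succ_left,
      Function.iterate_succ_apply, Function.iterate_zero_apply, and_assoc]

variable {J : TwoSidedIdeal A}

lemma reductionSeq_subset_orbitNullIdeal (n : ℕ) :
    reductionSeq α J n ⊆ orbitNullIdeal α J := by
  intro a ha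
  obtain ⟨hJ, hn⟩ := mem_reductionSeq_iff.1 ha
  have hzero : ∀ k, n ≤ k → (⇑α)^[k] a = 0 := fun k hk => by
    obtain ⟨m, rfl⟩ := Nat.exists_eq_add_of_le hk
    rw [add_comm, Function.iterate_add_apply, hn, iterate_map_zero]
  refine mem_orbitNullIdeal.2 ⟨fun k => ?_, tendsto_const_nhds.congr' ?_⟩
  · rcases lt_or_ge k n with hk | hk
    · exact hJ k hk
    · simp [hzero k hk, J.zero_mem]
  · filter_upwards [eventually_ge_atTop n] with k hk using (hzero k hk).symm

lemma orbitNullIdeal_subset_closure_iUnion_reductionSeq :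
    (orbitNullIdeal α J : Set A) ⊆ closure (⋃ n, reductionSeq α J n) := by
  intro a ha
  rw [SetLike.mem_coe, mem_orbitNullIdeal] at ha
  refine Metric.mem_closure_iff.2 fun δ hδ => ?_
  set ε := δ ^ 2 / 4 with hε_def
  have hε : 0 < ε := by positivity
  obtain ⟨n, hn⟩ : ∃ n, ‖(⇑α)^[n] a‖ ^ 2 < ε := by
    simpa using ((tendsto_order.1 (ha.2.norm.pow 2)).2 ε (by simpa using hε)).exists
  have hcomm : ∀ k, (⇑α)^[k] (cutoff ε a) = cutoff ε ((⇑α)^[k] a) :=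
    fun k => Function.Commute.iterate_left (map_cutoff α ε) k a
  refine ⟨cutoff ε a, Set.mem_iUnion.2 ⟨n, mem_reductionSeq_iff.2 ⟨fun k _ => ?_, ?_⟩⟩, ?_⟩
  · rw [hcomm]
    exact J.mul_mem_right _ _ (ha.1 k)
  · rw [hcomm, cutoff_eq_zero hε.le hn.le]
  · rw [dist_eq_norm]
    refine lt_of_pow_lt_pow_left₀ 2 hδ.le ?_
    nlinarith [norm_sub_cutoff_sq_le hε a]

lemma closure_iUnion_reductionSeq (hJ : IsClosed (J : Set A)) :
    closure (⋃ n, reductionSeq α J n) = orbitNullIdeal α J :=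
  (closure_minimal (Set.iUnion_subset reductionSeq_subset_orbitNullIdeal)
    (isClosed_orbitNullIdeal hJ)).antisymm orbitNullIdeal_subset_closure_iUnion_reductionSeq

end Reduction

end

/-- The reduction ideal `J_∞ = closure (⋃ n, J_n)` equals
`{a : αⁿ(a) ∈ J for all n, and αⁿ(a) → 0}`, and it is the largest `α`-invariant closed
two-sided ideal contained in `J ∩ {a : αⁿ(a) → 0}`. -/
theorem reductionIdeal_characterization
    {A : Type*} [CStarAlgebra A] (α : A →⋆ₐ[ℂ] A)
    (J : TwoSidedIdeal A) (hJ : IsClosed (J : Set A)) :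
    closure (⋃ n : ℕ, reductionSeq α (J : Set A) n) =
      {a : A | (∀ n : ℕ, (⇑α)^[n] a ∈ J) ∧ Tendsto (fun n => (⇑α)^[n] a) atTop (𝓝 0)} ∧
    (∃ I : TwoSidedIdeal A,
      (I : Set A) = closure (⋃ n : ℕ, reductionSeq α (J : Set A) n)) ∧
    (∀ a ∈ closure (⋃ n : ℕ, reductionSeq α (J : Set A) n),
      α a ∈ closure (⋃ n : ℕ, reductionSeq α (J : Set A) n)) ∧
    closure (⋃ n : ℕ, reductionSeq α (J : Set A) n) ⊆
      (J : Set A) ∩ {a : A | Tendsto (fun n => (⇑α)^[n] a) atTop (𝓝 0)} ∧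
    (∀ K : TwoSidedIdeal A, IsClosed (K : Set A) → (∀ a ∈ K, α a ∈ K) →
      (K : Set A) ⊆ (J : Set A) ∩ {a : A | Tendsto (fun n => (⇑α)^[n] a) atTop (𝓝 0)} →
      (K : Set A) ⊆ closure (⋃ n : ℕ, reductionSeq α (J : Set A) n)) := by
  rw [closure_iUnion_reductionSeq hJ]
  exact ⟨coe_orbitNullIdeal, ⟨_, rfl⟩, fun _ => map_mem_orbitNullIdeal,
    fun a ha => ⟨by simpa using (mem_orbitNullIdeal.1 ha).1 0, (mem_orbitNullIdeal.1 ha).2⟩,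
    fun K _ hK hKJ => le_orbitNullIdeal hK (fun a ha => (hKJ ha).1) (fun a ha => (hKJ ha).2)⟩
end

section
/- Let A be a unital C*-algebra, α : A → A a *-endomorphism, and J a closed ideal of A with J_∞ the reduction ideal (closure of the union of J_n where J₀ = {0}, J_{n+1} = {a ∈ J : α(a) ∈ J_n}). Then J_∞ is the smallest closed α-invariant ideal K of A satisfying: if a ∈ J and α(a) ∈ K then a ∈ K. Moreover, J_∞ = {0} if and only if ker α ∩ J = {0}. -/
/-!
Each level `J_n` is a closed two-sided ideal and the levels increase, so `J_∞` is a closed ideal;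
invariance and minimality follow from the recursion. The content is absorption. Closed ideals of a
C⋆-algebra are hereditary, so if `‖α(a)⋆α(a) - b⋆b‖ < ε` with `b ∈ J_n`, the cut-off
`(α(a)⋆α(a) - ε)₊` lies in `J_n`. Hence `u = a · (a⋆a - ε)₊ / max(a⋆a, ε)` lies in `J_{n+1}` when
`a ∈ J`, while `‖a - u‖² ≤ ε`.
-/

open scoped CStarAlgebra

namespace TwoSidedIdeal

variable {R : Type*} [Ring R]

lemma coe_iSup_of_directed {ι : Type*} [Nonempty ι] {I : ι → TwoSidedIdeal R}
    (hI : Directed (· ≤ ·) I) : ((⨆ i, I i : TwoSidedIdeal R) : Set R) = ⋃ i, (I i : Set R) := by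
  have common {x y : R} (hx : x ∈ ⋃ i, (I i : Set R)) (hy : y ∈ ⋃ i, (I i : Set R)) :
      ∃ k, x ∈ I k ∧ y ∈ I k := by
    obtain ⟨i, hi⟩ := Set.mem_iUnion.mp hx
    obtain ⟨j, hj⟩ := Set.mem_iUnion.mp hy
    obtain ⟨k, hik, hjk⟩ := hI i j
    exact ⟨k, hik hi, hjk hj⟩
  let U : TwoSidedIdeal R := .mk' (⋃ i, (I i : Set R))
    (Set.mem_iUnion.mpr ⟨Classical.arbitrary ι, (I _).zero_mem⟩)
    (fun hx hy ↦ let ⟨k, hxk, hyk⟩ := common hx hy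
      Set.mem_iUnion.mpr ⟨k, (I k).add_mem hxk hyk⟩)
    (fun hx ↦ let ⟨k, hk⟩ := Set.mem_iUnion.mp hx; Set.mem_iUnion.mpr ⟨k, (I k).neg_mem hk⟩)
    (fun hy ↦ let ⟨k, hk⟩ := Set.mem_iUnion.mp hy
      Set.mem_iUnion.mpr ⟨k, (I k).mul_mem_left _ _ hk⟩)
    (fun hx ↦ let ⟨k, hk⟩ := Set.mem_iUnion.mp hx
      Set.mem_iUnion.mpr ⟨k, (I k).mul_mem_right _ _ hk⟩)
  have hU : ⨆ i, I i ≤ U := iSup_le fun i x hx ↦ (mem_mk' ..).mpr (Set.mem_iUnion.mpr ⟨i, hx⟩)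
  exact subset_antisymm (fun x hx ↦ (mem_mk' ..).mp (hU hx))
    (Set.iUnion_subset fun i ↦ le_iSup I i)

variable [TopologicalSpace R] [IsTopologicalRing R]

def topologicalClosure (I : TwoSidedIdeal R) : TwoSidedIdeal R :=
  .mk' (closure I) (subset_closure I.zero_mem)
    (fun hx hy ↦ map_mem_closure₂ continuous_add hx hy fun _ ha _ hb ↦ I.add_mem ha hb)
    (fun hx ↦ map_mem_closure continuous_neg hx fun _ ha ↦ I.neg_mem ha)
    (fun {x _} hy ↦ map_mem_closure (continuous_const_mul x) hy fun _ ha ↦ I.mul_mem_left _ _ ha)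
    (fun {_ y} hx ↦ map_mem_closure (f := (· * y)) (continuous_mul_const y) hx fun _ ha ↦
      I.mul_mem_right _ _ ha)

lemma coe_topologicalClosure (I : TwoSidedIdeal R) :
    (I.topologicalClosure : Set R) = closure I := by
  rw [topologicalClosure, coe_mk']

lemma le_topologicalClosure (I : TwoSidedIdeal R) : I ≤ I.topologicalClosure := by
  rw [le_iff, coe_topologicalClosure]
  exact subset_closure

end TwoSidedIdeal

lemma abs_mul_inv_mul_mul_mul_inv_le {δ s t : ℝ} (hδ : 0 ≤ δ) (hs : 0 < s) (ht : 0 ≤ t)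
    (hδt : δ * t ≤ s ^ 2) : |δ * s⁻¹ * t * (δ * s⁻¹)| ≤ δ := by
  have hq : 0 ≤ δ * t / s ^ 2 := div_nonneg (mul_nonneg hδ ht) (sq_nonneg s)
  rw [show δ * s⁻¹ * t * (δ * s⁻¹) = δ * (δ * t / s ^ 2) by field_simp,
    abs_of_nonneg (mul_nonneg hδ hq)]
  exact mul_le_of_le_one_right hδ ((div_le_one (pow_pos hs 2)).mpr hδt)

section CFC

variable {A : Type*} [CStarAlgebra A]

lemma cfc_mul_mul_cfc (f g : ℝ → ℝ) (a : A) (hf : ContinuousOn f (spectrum ℝ a))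
    (hg : ContinuousOn g (spectrum ℝ a)) :
    cfc f a * cfc g a * cfc f a = cfc (fun t ↦ f t * g t * f t) a := by
  rw [← cfc_mul f g a hf hg, ← cfc_mul (fun t ↦ f t * g t) f a (hf.mul hg) hf]

lemma sub_mul_cfc_eq_mul_cfc {f g : ℝ → ℝ} {y : A} (hy : IsSelfAdjoint y)
    (hf : ContinuousOn f (spectrum ℝ y)) (hg : ContinuousOn g (spectrum ℝ y))
    (hfg : ∀ t ∈ spectrum ℝ y, f t + g t = 1) (z : A) :
    z - z * cfc f y = z * cfc g y := by
  have hsum : cfc f y + cfc g y = 1 := by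
    rw [← cfc_add (a := y) f g hf hg, cfc_congr hfg, cfc_const_one ℝ y]
  nth_rewrite 1 [← mul_one z]
  rw [← hsum, mul_add, add_sub_cancel_left]

lemma norm_mul_cfc_sq_le [PartialOrder A] [StarOrderedRing A] {z y : A} (hzy : star z * z ≤ y)
    {f : ℝ → ℝ} (hf : ContinuousOn f (spectrum ℝ y)) {δ : ℝ} (hδ : 0 ≤ δ)
    (hfδ : ∀ t ∈ spectrum ℝ y, ‖f t * t * f t‖ ≤ δ) :
    ‖z * cfc f y‖ ^ 2 ≤ δ := by
  have hy : IsSelfAdjoint y := .of_nonneg ((star_mul_self_nonneg z).trans hzy)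
  have hd : IsSelfAdjoint (cfc f y) := cfc_predicate f y
  calc ‖z * cfc f y‖ ^ 2 = ‖cfc f y * (star z * z) * cfc f y‖ := by
        rw [sq, ← CStarRing.norm_star_mul_self, star_mul, hd.star_eq, mul_assoc, mul_assoc,
          mul_assoc]
    _ ≤ ‖cfc f y * y * cfc f y‖ :=
        CStarAlgebra.norm_le_norm_of_nonneg_of_le
          (hd.conjugate_nonneg (star_mul_self_nonneg z)) (hd.conjugate_le_conjugate hzy)
    _ = ‖cfc (fun t ↦ f t * t * f t) y‖ := by
        rw [← cfc_mul_mul_cfc f (fun t ↦ t) y hf continuousOn_id, cfc_id' ℝ y]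
    _ ≤ δ := norm_cfc_le hδ hfδ

end CFC

namespace TwoSidedIdeal

variable {A : Type*} [CStarAlgebra A] [PartialOrder A] [StarOrderedRing A]
  {I : TwoSidedIdeal A}

lemma mem_of_star_mul_self_le (hI : IsClosed (I : Set A)) {z y : A} (hzy : star z * z ≤ y)
    (hy : y ∈ I) : z ∈ I := by
  have hy0 : 0 ≤ y := (star_mul_self_nonneg z).trans hzy
  have hspec : ∀ t ∈ spectrum ℝ y, 0 ≤ t := fun t ht ↦ spectrum_nonneg_of_nonneg hy0 ht
  rw [← SetLike.mem_coe, ← hI.closure_eq, Metric.mem_closure_iff]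
  intro ε hε
  set δ := (ε / 2) ^ 2
  have hδ : 0 < δ := by positivity
  have hpos : ∀ t ∈ spectrum ℝ y, 0 < t + δ := fun t ht ↦ by linarith [hspec t ht]
  have hinv : ContinuousOn (fun t : ℝ ↦ (t + δ)⁻¹) (spectrum ℝ y) :=
    (continuousOn_id.add continuousOn_const).inv₀ fun t ht ↦ (hpos t ht).ne'
  -- `z * (y (y + δ)⁻¹) ∈ I`, and `star z * z ≤ y` makes it `√δ`-close to `z`
  have happrox : z - z * cfc (fun t ↦ t * (t + δ)⁻¹) y = z * cfc (fun t ↦ δ * (t + δ)⁻¹) y :=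
    sub_mul_cfc_eq_mul_cfc (f := fun t ↦ t * (t + δ)⁻¹) (g := fun t ↦ δ * (t + δ)⁻¹)
      (.of_nonneg hy0) (continuousOn_id.mul hinv) (continuousOn_const.mul hinv)
      (fun t ht ↦ by field_simp [(hpos t ht).ne']) z
  have hbound : ‖z * cfc (fun t ↦ δ * (t + δ)⁻¹) y‖ ^ 2 ≤ δ := by
    refine norm_mul_cfc_sq_le (f := fun t ↦ δ * (t + δ)⁻¹) hzy (continuousOn_const.mul hinv)
      hδ.le fun t ht ↦ ?_
    rw [Real.norm_eq_abs]
    exact abs_mul_inv_mul_mul_mul_inv_le hδ.le (hpos t ht) (hspec t ht) (by nlinarith [hspec t ht])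
  refine ⟨z * cfc (fun t ↦ t * (t + δ)⁻¹) y, I.mul_mem_left _ _ ?_, ?_⟩
  · rw [cfc_mul (fun t ↦ t) _ y continuousOn_id hinv, cfc_id' ℝ y]
    exact I.mul_mem_right _ _ hy
  · rw [dist_eq_norm, happrox]
    linarith [(sq_le_sq₀ (norm_nonneg _) (by positivity)).mp hbound]

lemma mem_of_nonneg_of_le (hI : IsClosed (I : Set A)) {x y : A} (hx : 0 ≤ x) (hxy : x ≤ y)
    (hy : y ∈ I) : x ∈ I := by
  have hsqrt : star (CFC.sqrt x) * CFC.sqrt x = x := by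
    rw [(CFC.sqrt_nonneg x).isSelfAdjoint.star_eq, CFC.sqrt_mul_sqrt_self x hx]
  have hle : star (CFC.sqrt x) * CFC.sqrt x ≤ y := by rwa [hsqrt]
  rw [← hsqrt]
  exact I.mul_mem_left _ _ (mem_of_star_mul_self_le hI hle hy)

lemma cfc_max_sub_mem_of_norm_sub_lt (hI : IsClosed (I : Set A)) {y c : A} (hy : 0 ≤ y)
    (hc : IsSelfAdjoint c) (hcI : c ∈ I) {ε : ℝ} (hyc : ‖y - c‖ < ε) :
    cfc (fun t ↦ max (t - ε) 0) y ∈ I := by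
  set δ := ‖y - c‖
  have hδε : 0 < ε - δ := sub_pos.mpr hyc
  have hyδ : y - algebraMap ℝ A δ ≤ c :=
    sub_le_comm.mp ((IsSelfAdjoint.of_nonneg hy).sub hc).le_algebraMap_norm_self
  -- `k (t - δ) k = (t - ε)₊`, so `(y - ε)₊ = k(y) (y - δ) k(y) ≤ k(y) c k(y)`
  set k : ℝ → ℝ := fun t ↦ √(max (t - ε) 0 / max (t - δ) (ε - δ))
  have hk : Continuous k := by
    refine Real.continuous_sqrt.comp
      (((continuous_id.sub continuous_const).max continuous_const).div
        ((continuous_id.sub continuous_const).max continuous_const) fun t ↦ ?_)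
    exact (lt_max_of_lt_right hδε).ne'
  have hkk : ∀ t, k t * (t - δ) * k t = max (t - ε) 0 := by
    intro t
    have hsq : k t * k t = max (t - ε) 0 / max (t - δ) (ε - δ) :=
      Real.mul_self_sqrt (div_nonneg (le_max_right _ _) (lt_max_of_lt_right hδε).le)
    rw [mul_right_comm, hsq]
    rcases le_or_gt ε t with h | h
    · rw [max_eq_left (by linarith : t - δ ≥ ε - δ), div_mul_cancel₀ _ (by linarith)]
    · rw [max_eq_right (by linarith : t - ε ≤ 0), zero_div, zero_mul]
  have hconj : cfc (fun t ↦ max (t - ε) 0) y = cfc k y * (y - algebraMap ℝ A δ) * cfc k y := by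
    have hsub : y - algebraMap ℝ A δ = cfc (fun t ↦ t - δ) y := by
      rw [cfc_sub (fun t ↦ t) (fun _ ↦ δ) y, cfc_id' ℝ y, cfc_const δ y]
    rw [hsub, cfc_mul_mul_cfc k _ y hk.continuousOn (by fun_prop)]
    exact cfc_congr fun t _ ↦ (hkk t).symm
  refine mem_of_nonneg_of_le hI (cfc_nonneg fun t _ ↦ le_max_right _ _) ?_
    (I.mul_mem_right _ _ (I.mul_mem_left _ _ hcI) : cfc k y * c * cfc k y ∈ I)
  rw [hconj]
  exact (cfc_predicate k y).conjugate_le_conjugate hyδ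

end TwoSidedIdeal

section Cutoff

variable {A B : Type*} [CStarAlgebra A] [CStarAlgebra B]

lemma norm_sub_mul_cfc_sq_le [PartialOrder A] [StarOrderedRing A] (a : A) {ε : ℝ} (hε : 0 < ε) :
    ‖a - a * cfc (fun t ↦ (max t ε)⁻¹ * max (t - ε) 0) (star a * a)‖ ^ 2 ≤ ε := by
  have hmax : ∀ t, 0 < max t ε := fun t ↦ lt_max_of_lt_right hε
  have hinv : Continuous fun t : ℝ ↦ (max t ε)⁻¹ :=
    (continuous_id.max continuous_const).inv₀ fun t ↦ (hmax t).ne'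
  have hcut : Continuous fun t : ℝ ↦ max (t - ε) 0 :=
    (continuous_id.sub continuous_const).max continuous_const
  rw [sub_mul_cfc_eq_mul_cfc (f := fun t ↦ (max t ε)⁻¹ * max (t - ε) 0)
    (g := fun t ↦ ε * (max t ε)⁻¹) (.star_mul_self a)
    (hinv.mul hcut).continuousOn (continuous_const.mul hinv).continuousOn ?sum]
  case sum =>
    intro t _
    field_simp [(hmax t).ne']
    rcases le_total t ε with h | h
    · rw [max_eq_right h, max_eq_right (by linarith)]; ring
    · rw [max_eq_left h, max_eq_left (by linarith)]; ring
  refine norm_mul_cfc_sq_le (f := fun t ↦ ε * (max t ε)⁻¹) le_rfl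
    (continuous_const.mul hinv).continuousOn hε.le fun t ht ↦ ?_
  rw [Real.norm_eq_abs]
  exact abs_mul_inv_mul_mul_mul_inv_le hε.le (hmax t)
    (spectrum_nonneg_of_nonneg (star_mul_self_nonneg a) ht)
    (by nlinarith [le_max_left t ε, le_max_right t ε])

lemma map_mul_cfc_mem [PartialOrder B] [StarOrderedRing B] (φ : A →⋆ₐ[ℂ] B)
    {I : TwoSidedIdeal B} (hI : IsClosed (I : Set B)) (a : A) {b : B} (hb : b ∈ I) {ε : ℝ}
    (hε : 0 < ε) (hab : ‖star (φ a) * φ a - star b * b‖ < ε) :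
    φ (a * cfc (fun t ↦ (max t ε)⁻¹ * max (t - ε) 0) (star a * a)) ∈ I := by
  have hinv : Continuous fun t : ℝ ↦ (max t ε)⁻¹ :=
    (continuous_id.max continuous_const).inv₀ fun t ↦ (lt_max_of_lt_right hε).ne'
  have hcut : Continuous fun t : ℝ ↦ max (t - ε) 0 :=
    (continuous_id.sub continuous_const).max continuous_const
  rw [map_mul, StarAlgHom.map_cfc φ (fun t ↦ (max t ε)⁻¹ * max (t - ε) 0) _
      (hinv.mul hcut).continuousOn (map_continuous φ) (.star_mul_self a)
      ((IsSelfAdjoint.star_mul_self a).map φ), map_mul, map_star,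
    cfc_mul _ _ _ hinv.continuousOn hcut.continuousOn, ← mul_assoc]
  exact I.mul_mem_left _ _ (TwoSidedIdeal.cfc_max_sub_mem_of_norm_sub_lt hI
    (star_mul_self_nonneg _) (.star_mul_self b) (I.mul_mem_left _ _ hb) hab)

end Cutoff

section Reduction

variable {A : Type*} [CStarAlgebra A] (α : A →⋆ₐ[ℂ] A) (J : TwoSidedIdeal A)

def reductionLevel : ℕ → TwoSidedIdeal A
  | 0 => ⊥
  | n + 1 => J ⊓ (reductionLevel n).comap α

lemma mem_reductionLevel_succ {n : ℕ} {a : A} :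
    a ∈ reductionLevel α J (n + 1) ↔ a ∈ J ∧ α a ∈ reductionLevel α J n := by
  rw [reductionLevel, TwoSidedIdeal.mem_inf, TwoSidedIdeal.mem_comap]

lemma coe_reductionLevel (n : ℕ) : (reductionLevel α J n : Set A) = reductionSeq α J n := by
  induction n with
  | zero => rfl
  | succ n ih =>
    ext a
    rw [SetLike.mem_coe, mem_reductionLevel_succ, ← SetLike.mem_coe (x := α a), ih]
    rfl

lemma reductionLevel_mono : Monotone (reductionLevel α J) := by
  refine monotone_nat_of_le_succ fun n ↦ ?_
  induction n with
  | zero => exact bot_le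
  | succ n ih => exact inf_le_inf_left J (TwoSidedIdeal.comap_le_comap α ih)

lemma isClosed_reductionLevel (hJ : IsClosed (J : Set A)) (n : ℕ) :
    IsClosed (reductionLevel α J n : Set A) := by
  induction n with
  | zero => exact isClosed_singleton
  | succ n ih =>
    convert hJ.inter (ih.preimage (map_continuous α)) using 1
    ext a
    exact mem_reductionLevel_succ α J

def reductionIdeal : TwoSidedIdeal A :=
  (⨆ n, reductionLevel α J n).topologicalClosure

lemma coe_reductionIdeal :
    (reductionIdeal α J : Set A) = closure (⋃ n, (reductionLevel α J n : Set A)) := by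
  rw [reductionIdeal, TwoSidedIdeal.coe_topologicalClosure,
    TwoSidedIdeal.coe_iSup_of_directed (reductionLevel_mono α J).directed_le]

lemma isClosed_reductionIdeal : IsClosed (reductionIdeal α J : Set A) := by
  rw [coe_reductionIdeal]
  exact isClosed_closure

lemma reductionLevel_le_reductionIdeal (n : ℕ) : reductionLevel α J n ≤ reductionIdeal α J :=
  (le_iSup (reductionLevel α J) n).trans (TwoSidedIdeal.le_topologicalClosure _)

lemma map_mem_reductionIdeal {a : A} (ha : a ∈ reductionIdeal α J) :
    α a ∈ reductionIdeal α J := by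
  rw [← SetLike.mem_coe, coe_reductionIdeal] at ha ⊢
  refine map_mem_closure (map_continuous α) ha fun x hx ↦ ?_
  obtain ⟨n, hn⟩ := Set.mem_iUnion.mp hx
  cases n with
  | zero =>
    rw [SetLike.mem_coe, reductionLevel, TwoSidedIdeal.mem_bot] at hn
    rw [hn, map_zero]
    exact Set.mem_iUnion.mpr ⟨0, (reductionLevel α J 0).zero_mem⟩
  | succ n => exact Set.mem_iUnion.mpr ⟨n, ((mem_reductionLevel_succ α J).mp hn).2⟩

lemma reductionIdeal_le {K : TwoSidedIdeal A} (hK : IsClosed (K : Set A))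
    (hJK : ∀ a ∈ J, α a ∈ K → a ∈ K) : reductionIdeal α J ≤ K := by
  have hlevel : ∀ n, reductionLevel α J n ≤ K := by
    intro n
    induction n with
    | zero => exact bot_le
    | succ n ih =>
      intro a ha
      rw [mem_reductionLevel_succ] at ha
      exact hJK a ha.1 (ih ha.2)
  rw [TwoSidedIdeal.le_iff, coe_reductionIdeal]
  exact closure_minimal (Set.iUnion_subset hlevel) hK

lemma mem_reductionIdeal_of_map_mem (hJ : IsClosed (J : Set A)) {a : A} (ha : a ∈ J)
    (hαa : α a ∈ reductionIdeal α J) : a ∈ reductionIdeal α J := by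
  let _ := CStarAlgebra.spectralOrder A
  have _ := CStarAlgebra.spectralOrderedRing A
  rw [← SetLike.mem_coe, coe_reductionIdeal] at hαa ⊢
  rw [Metric.mem_closure_iff]
  intro r hr
  have hε : 0 < (r / 2) ^ 2 := by positivity
  obtain ⟨-, ⟨b, hb, rfl⟩, hab⟩ := Metric.mem_closure_iff.mp
    (map_mem_closure (by fun_prop) hαa (Set.mapsTo_image (fun x : A ↦ star x * x) _)) _ hε
  obtain ⟨n, hbn⟩ := Set.mem_iUnion.mp hb
  refine ⟨_, Set.mem_iUnion.mpr ⟨n + 1, (mem_reductionLevel_succ α J).mpr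
    ⟨J.mul_mem_right _ _ ha, map_mul_cfc_mem α (isClosed_reductionLevel α J hJ n) a hbn hε
      (by rwa [← dist_eq_norm])⟩⟩, ?_⟩
  rw [dist_eq_norm]
  linarith [(sq_le_sq₀ (norm_nonneg _) (by positivity)).mp (norm_sub_mul_cfc_sq_le a hε)]

lemma reductionIdeal_eq_bot_iff :
    reductionIdeal α J = ⊥ ↔ {a : A | α a = 0} ∩ (J : Set A) = {0} := by
  have hlevel_one : {a : A | α a = 0} ∩ (J : Set A) = reductionLevel α J 1 := by
    ext a
    rw [SetLike.mem_coe, mem_reductionLevel_succ, reductionLevel, TwoSidedIdeal.mem_bot]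
    exact and_comm
  rw [hlevel_one, ← TwoSidedIdeal.coe_bot, SetLike.coe_set_eq]
  refine ⟨fun h ↦ le_bot_iff.mp (h ▸ reductionLevel_le_reductionIdeal α J 1), fun h ↦ ?_⟩
  have hlevel : ∀ n, reductionLevel α J n = ⊥ := by
    intro n
    induction n with
    | zero => rfl
    | succ n ih => rw [reductionLevel, ih]; exact h
  rw [← SetLike.coe_set_eq, coe_reductionIdeal]
  simp [hlevel]

end Reduction

/-- The reduction ideal `J_∞ = closure (⋃ n, J_n)` is the smallest closed
`α`-invariant two-sided ideal `K` satisfying `a ∈ J ∧ α(a) ∈ K → a ∈ K`; moreover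
`J_∞ = {0}` if and only if `ker α ∩ J = {0}`. -/
theorem reductionIdeal_minimality
    {A : Type*} [CStarAlgebra A] (α : A →⋆ₐ[ℂ] A)
    (J : TwoSidedIdeal A) (hJ : IsClosed (J : Set A)) :
    (∃ I : TwoSidedIdeal A,
      (I : Set A) = closure (⋃ n : ℕ, reductionSeq α (J : Set A) n)) ∧
    IsClosed (closure (⋃ n : ℕ, reductionSeq α (J : Set A) n)) ∧
    (∀ a ∈ closure (⋃ n : ℕ, reductionSeq α (J : Set A) n),
      α a ∈ closure (⋃ n : ℕ, reductionSeq α (J : Set A) n)) ∧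
    (∀ a ∈ J, α a ∈ closure (⋃ n : ℕ, reductionSeq α (J : Set A) n) →
      a ∈ closure (⋃ n : ℕ, reductionSeq α (J : Set A) n)) ∧
    (∀ K : TwoSidedIdeal A, IsClosed (K : Set A) → (∀ a ∈ K, α a ∈ K) →
      (∀ a ∈ J, α a ∈ (K : Set A) → a ∈ K) →
      closure (⋃ n : ℕ, reductionSeq α (J : Set A) n) ⊆ (K : Set A)) ∧
    (closure (⋃ n : ℕ, reductionSeq α (J : Set A) n) = ({0} : Set A) ↔
      {a : A | α a = 0} ∩ (J : Set A) = {0}) := by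
  have hcoe : closure (⋃ n, reductionSeq α (J : Set A) n) = reductionIdeal α J := by
    simp_rw [coe_reductionIdeal, coe_reductionLevel]
  rw [hcoe, ← TwoSidedIdeal.coe_bot, SetLike.coe_set_eq]
  exact ⟨⟨_, rfl⟩, isClosed_reductionIdeal α J, fun _ ↦ map_mem_reductionIdeal α J,
    fun _ ha ↦ mem_reductionIdeal_of_map_mem α J hJ ha,
    fun _ hK _ hJK ↦ reductionIdeal_le α J hK hJK, reductionIdeal_eq_bot_iff α J⟩
end

section
/- Let (π, U, H) be a faithful J-covariant representation of (A, α), i.e. π faithful, U π(a) U* = π(α(a)) for all a, and J = {a : U*U π(a) = π(a)} where J ∩ ker α = {0}. Then the map sending (a + I) ⊕ (b + J) to U*U π(a) + (1 − U*U) π(b) (where I = ker α) is a well-defined isometric *-isomorphism from A_J = (A/I) ⊕ (A/J) onto the C*-algebra generated by π(A) and U*U. -/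
/-!
Covariance at `a = 1` gives `U U* = 1`, so `P = U*U` is a projection. The C*-identity yields
`‖Uπ(a)(1 - P)‖² = ‖π(α(a a*)) - π(α a) π(α a*)‖ = 0`, hence `Pπ(a)(1 - P) = 0` for every `a`,
and therefore `P` commutes with `π(A)`. So `(a, b) ↦ Pπ(a) + (1 - P)π(b)` is a *-homomorphism
on `A × A`; its kernel is `ker α × J` because `Pπ(a) = 0` iff `π(α a) = Uπ(a)U* = 0`. It descends
to an injective, hence isometric, *-homomorphism on `A/I × A/J`, whose range is the *-algebra
generated by `π(A)` and `P`, already closed since it is isometric to a C*-algebra.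
-/

section StarRing

variable {D : Type*} [Ring D] [StarRing D]

theorem isStarProjection_star_mul_self_of_mul_star_eq_one {U : D} (hU : U * star U = 1) :
    IsStarProjection (star U * U) where
  isIdempotentElem := by
    rw [IsIdempotentElem, mul_assoc, ← mul_assoc U, hU, one_mul]
  isSelfAdjoint := .star_mul_self U

theorem IsStarProjection.commute_of_mul_mul_one_sub_eq_zero {p x : D} (hp : IsStarProjection p)
    (hx : p * x * (1 - p) = 0) (hx' : p * star x * (1 - p) = 0) : Commute p x := by
  have hpx : p * x = p * x * p := by rwa [mul_sub, mul_one, sub_eq_zero] at hx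
  have hxp : x * p = p * x * p := by
    have := congrArg star hx'
    rwa [star_mul, star_mul, star_sub, star_one, star_star, hp.isSelfAdjoint.star_eq, star_zero,
      ← mul_assoc, sub_mul, sub_mul, one_mul, sub_eq_zero] at this
  exact hpx.trans hxp.symm

theorem mul_mul_star_eq_zero_iff_of_commute {U x : D} (hU : U * star U = 1)
    (hx : Commute (star U * U) x) : U * x * star U = 0 ↔ star U * U * x = 0 := by
  have hUP : U * (star U * U) = U := by rw [← mul_assoc, hU, one_mul]
  constructor
  · intro h
    calc star U * U * x = star U * U * (star U * U) * x := by
          rw [(isStarProjection_star_mul_self_of_mul_star_eq_one hU).isIdempotentElem.eq]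
      _ = star U * (U * x * star U) * U := by rw [mul_assoc _ _ x, hx.eq]; noncomm_ring
      _ = 0 := by rw [h, mul_zero, zero_mul]
  · intro h
    rw [← hUP, mul_assoc U, h, mul_zero, zero_mul]

end StarRing

theorem mul_mul_one_sub_star_mul_self_eq_zero {E : Type*} [NormedRing E] [StarRing E]
    [CStarRing E] {U x : E} (hU : U * star U = 1)
    (hx : U * (x * star x) * star U = U * x * star U * (U * star x * star U)) :
    U * x * (1 - star U * U) = 0 := by
  have hq := (isStarProjection_star_mul_self_of_mul_star_eq_one hU).one_sub
  rw [← CStarRing.mul_star_self_eq_zero_iff]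
  calc U * x * (1 - star U * U) * star (U * x * (1 - star U * U))
      = U * x * ((1 - star U * U) * (1 - star U * U)) * star x * star U := by
        simp only [star_mul, hq.isSelfAdjoint.star_eq, mul_assoc]
    _ = U * (x * star x) * star U - U * x * star U * (U * star x * star U) := by
        rw [hq.isIdempotentElem.eq]; noncomm_ring
    _ = 0 := by rw [hx, sub_self]

theorem mul_star_eq_one_of_covariant {R A E : Type*} [CommSemiring R] [Semiring A] [Star A]
    [Algebra R A] [Semiring E] [Star E] [Algebra R E] {α : A →⋆ₐ[R] A} {π : A →⋆ₐ[R] E} {U : E}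
    (hcov : ∀ a, U * π a * star U = π (α a)) : U * star U = 1 := by
  simpa using hcov 1

section Covariant

variable {R A E : Type*} [CommSemiring R] [Semiring A] [Star A] [Algebra R A]
  [NormedRing E] [StarRing E] [CStarRing E] [Algebra R E]
  {α : A →⋆ₐ[R] A} {π : A →⋆ₐ[R] E} {U : E}

theorem commute_star_mul_self_of_covariant (hcov : ∀ a, U * π a * star U = π (α a)) (a : A) :
    Commute (star U * U) (π a) := by
  have hU := mul_star_eq_one_of_covariant hcov
  have hcompress : ∀ b, star U * U * π b * (1 - star U * U) = 0 := fun b => by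
    have h := mul_mul_one_sub_star_mul_self_eq_zero (x := π b) hU (by
      rw [← map_star, ← map_mul, hcov, hcov, hcov, map_mul, map_mul])
    rw [mul_assoc (star U), mul_assoc (star U), h, mul_zero]
  refine (isStarProjection_star_mul_self_of_mul_star_eq_one hU).commute_of_mul_mul_one_sub_eq_zero
    (hcompress a) ?_
  rw [← map_star]
  exact hcompress _

theorem star_mul_self_mul_eq_zero_iff_of_covariant (hcov : ∀ a, U * π a * star U = π (α a))
    (hπ : Function.Injective π) (a : A) : star U * U * π a = 0 ↔ α a = 0 := by
  rw [← mul_mul_star_eq_zero_iff_of_commute (mul_star_eq_one_of_covariant hcov)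
    (commute_star_mul_self_of_covariant hcov a), hcov, ← map_zero π, hπ.eq_iff]

end Covariant

namespace StarAlgHom

section CornerSum

variable {R A₁ A₂ D : Type*} [CommSemiring R] [Semiring A₁] [Star A₁] [Algebra R A₁]
  [Semiring A₂] [Star A₂] [Algebra R A₂] [Ring D] [StarRing D] [Algebra R D]
  {p : D} (hp : IsStarProjection p) (π₁ : A₁ →⋆ₐ[R] D) (π₂ : A₂ →⋆ₐ[R] D)
  (h₁ : ∀ a, Commute p (π₁ a)) (h₂ : ∀ a, Commute p (π₂ a))

def cornerSum : A₁ × A₂ →⋆ₐ[R] D where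
  toFun x := p * π₁ x.1 + (1 - p) * π₂ x.2
  map_one' := by simp
  map_mul' x y := by
    have h₁' a : Commute (1 - p) (π₁ a) := (Commute.one_left _).sub_left (h₁ a)
    have h₂' a : Commute (1 - p) (π₂ a) := (Commute.one_left _).sub_left (h₂ a)
    simp only [Prod.fst_mul, Prod.snd_mul, map_mul, add_mul, mul_add,
      (h₁ _).symm.mul_mul_mul_comm, (h₂ _).symm.mul_mul_mul_comm, (h₁' _).symm.mul_mul_mul_comm,
      (h₂' _).symm.mul_mul_mul_comm, hp.isIdempotentElem.eq, hp.one_sub.isIdempotentElem.eq,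
      hp.mul_one_sub_self, hp.one_sub_mul_self, zero_mul, add_zero, zero_add]
  map_zero' := by simp
  map_add' x y := by simp only [Prod.fst_add, Prod.snd_add, map_add, mul_add]; abel
  commutes' r := by
    rw [Prod.algebraMap_apply, AlgHomClass.commutes, AlgHomClass.commutes, ← add_mul,
      add_sub_cancel, one_mul]
  map_star' x := by
    simp only [Prod.fst_star, Prod.snd_star, map_star, star_add, star_mul, star_sub, star_one,
      hp.isSelfAdjoint.star_eq, (h₁ _).eq, ((Commute.one_left _).sub_left (h₂ _)).eq]

theorem cornerSum_apply (a : A₁) (b : A₂) :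
    cornerSum hp π₁ π₂ h₁ h₂ (a, b) = p * π₁ a + (1 - p) * π₂ b := rfl

theorem cornerSum_eq_zero_iff (a : A₁) (b : A₂) :
    cornerSum hp π₁ π₂ h₁ h₂ (a, b) = 0 ↔ p * π₁ a = 0 ∧ (1 - p) * π₂ b = 0 := by
  rw [cornerSum_apply]
  refine ⟨fun h => ⟨?_, ?_⟩, fun ⟨ha, hb⟩ => by rw [ha, hb, add_zero]⟩
  · simpa only [mul_add, ← mul_assoc, hp.isIdempotentElem.eq, hp.mul_one_sub_self, zero_mul,
      add_zero, mul_zero] using congrArg (p * ·) h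
  · simpa only [mul_add, ← mul_assoc, hp.one_sub.isIdempotentElem.eq, hp.one_sub_mul_self,
      zero_mul, zero_add, mul_zero] using congrArg ((1 - p) * ·) h

end CornerSum

theorem range_cornerSum {R A D : Type*} [CommRing R] [StarRing R] [Semiring A] [StarRing A]
    [Algebra R A] [Ring D] [StarRing D] [Algebra R D] [StarModule R D] {p : D}
    (hp : IsStarProjection p) (π : A →⋆ₐ[R] D) (h : ∀ a, Commute p (π a)) :
    Set.range (cornerSum hp π π h h) = StarAlgebra.adjoin R (Set.range π ∪ {p}) := by
  have hpmem : p ∈ StarAlgebra.adjoin R (Set.range π ∪ {p}) :=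
    StarAlgebra.subset_adjoin R _ (Or.inr rfl)
  have hπmem a : π a ∈ StarAlgebra.adjoin R (Set.range π ∪ {p}) :=
    StarAlgebra.subset_adjoin R _ (Or.inl ⟨a, rfl⟩)
  refine (Set.range_subset_iff.2 ?_).antisymm
    (StarAlgebra.adjoin_le (S := (cornerSum hp π π h h).range) ?_)
  · rintro ⟨a, b⟩
    exact add_mem (mul_mem hpmem (hπmem a)) (mul_mem (sub_mem (one_mem _) hpmem) (hπmem b))
  · rintro _ (⟨a, rfl⟩ | rfl)
    · exact ⟨(a, a), (cornerSum_apply ..).trans <| by rw [← add_mul, add_sub_cancel, one_mul]⟩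
    · exact ⟨(1, 0), (cornerSum_apply ..).trans <| by
        rw [map_one, map_zero, mul_one, mul_zero, add_zero]⟩

section LiftOfSurjective

variable {R A B C : Type*} [CommSemiring R] [Ring A] [Star A] [Algebra R A] [Ring B] [Star B]
  [Algebra R B] [Ring C] [Star C] [Algebra R C]
  (q : A →⋆ₐ[R] B) (hq : Function.Surjective q) (f : A →⋆ₐ[R] C) (hf : ∀ a, q a = 0 → f a = 0)

noncomputable def liftOfSurjective : B →⋆ₐ[R] C :=
  let g := (q : A →+* B).liftOfSurjective hq
    ⟨f, fun a ha => RingHom.mem_ker.mpr (hf a (RingHom.mem_ker.mp ha))⟩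
  have hg a : g (q a) = f a := RingHom.liftOfRightInverse_comp_apply _ _ _ _ a
  { g with
    commutes' r := by
      rw [← q.commutes r]
      exact (hg _).trans (f.commutes r)
    map_star' b := by
      obtain ⟨a, rfl⟩ := hq b
      rw [← map_star q]
      exact (hg _).trans ((map_star f a).trans (congrArg star (hg a).symm)) }

theorem liftOfSurjective_apply (a : A) : liftOfSurjective q hq f hf (q a) = f a :=
  RingHom.liftOfRightInverse_comp_apply _ _ _ _ a

theorem liftOfSurjective_injective (hf' : ∀ a, f a = 0 → q a = 0) :
    Function.Injective (liftOfSurjective q hq f hf) := by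
  rw [injective_iff_map_eq_zero]
  intro b hb
  obtain ⟨a, rfl⟩ := hq b
  exact hf' a (by rwa [liftOfSurjective_apply] at hb)

theorem range_liftOfSurjective : Set.range (liftOfSurjective q hq f hf) = Set.range f := by
  rw [← hq.range_comp]
  exact congrArg Set.range (funext (liftOfSurjective_apply q hq f hf))

end LiftOfSurjective

end StarAlgHom

theorem extension_isomorphic_to_generated_algebra_general
    {A : Type*} [CStarAlgebra A]
    {B : Type*} [CStarAlgebra B] {C : Type*} [CStarAlgebra C]
    {H : Type*} [NormedAddCommGroup H] [InnerProductSpace ℂ H] [CompleteSpace H]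
    (α : A →⋆ₐ[ℂ] A) (π : A →⋆ₐ[ℂ] (H →L[ℂ] H)) (U : H →L[ℂ] H)
    (hfaithful : Function.Injective π)
    (hcov : ∀ a : A, U * π a * star U = π (α a))
    (J : TwoSidedIdeal A)
    (hJ : (J : Set A) = {a : A | star U * U * π a = π a})
    (qI : A →⋆ₐ[ℂ] B) (hqI : Function.Surjective qI)
    (hkerI : ∀ a : A, qI a = 0 ↔ α a = 0)
    (qJ : A →⋆ₐ[ℂ] C) (hqJ : Function.Surjective qJ)
    (hkerJ : ∀ a : A, qJ a = 0 ↔ a ∈ J) :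
    ∃ Φ : (B × C) →⋆ₐ[ℂ] (H →L[ℂ] H),
      (∀ a b : A, Φ (qI a, qJ b) = star U * U * π a + (1 - star U * U) * π b) ∧
      Function.Injective Φ ∧
      (∀ x : B × C, ‖Φ x‖ = ‖x‖) ∧
      Set.range ⇑Φ =
        ((StarAlgebra.adjoin ℂ (Set.range ⇑π ∪ {star U * U})).topologicalClosure :
          Set (H →L[ℂ] H)) := by
  have hP := isStarProjection_star_mul_self_of_mul_star_eq_one (mul_star_eq_one_of_covariant hcov)
  have hcomm := commute_star_mul_self_of_covariant hcov
  let Ψ := StarAlgHom.cornerSum hP π π hcomm hcomm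
  let Q := (qI.comp (StarAlgHom.fst ℂ A A)).prod (qJ.comp (StarAlgHom.snd ℂ A A))
  have hQ : Function.Surjective Q := hqI.prodMap hqJ
  have hker : ∀ x, Q x = 0 ↔ Ψ x = 0 := by
    rintro ⟨a, b⟩
    have hJb : (1 - star U * U) * π b = 0 ↔ b ∈ J := by
      rw [← SetLike.mem_coe, hJ, Set.mem_ofPred_eq, sub_mul, one_mul, sub_eq_zero, eq_comm]
    rw [StarAlgHom.cornerSum_eq_zero_iff, hJb, star_mul_self_mul_eq_zero_iff_of_covariant hcov
      hfaithful, ← hkerI, ← hkerJ]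
    exact Prod.ext_iff
  let Φ := StarAlgHom.liftOfSurjective Q hQ Ψ fun x => (hker x).1
  have hΦ : Function.Injective Φ :=
    StarAlgHom.liftOfSurjective_injective _ _ _ _ fun x => (hker x).2
  have hclosed : IsClosed (Set.range Φ) :=
    (NonUnitalStarAlgHom.isometry Φ hΦ).isClosedEmbedding.isClosed_range
  refine ⟨Φ, fun a b => StarAlgHom.liftOfSurjective_apply Q hQ Ψ _ (a, b), hΦ,
    NonUnitalStarAlgHom.norm_map Φ hΦ, ?_⟩
  rw [StarSubalgebra.topologicalClosure_coe, ← StarAlgHom.range_cornerSum hP π hcomm,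
    ← StarAlgHom.range_liftOfSurjective Q hQ Ψ fun x => (hker x).1, hclosed.closure_eq]

/-- Let `(π, U, H)` be a faithful `J`-covariant representation of `(A, α)`
(`π` faithful, `U π(a) U* = π(α(a))`, `J = {a : U*U π(a) = π(a)}`, `J ∩ ker α = {0}`).
With `A/I` (`I = ker α`) and `A/J` realized via surjective *-homomorphisms `qI`, `qJ`,
the map `(qI a, qJ b) ↦ U*U π(a) + (1 − U*U) π(b)` is a well-defined isometric
*-isomorphism from `A_J = (A/I) ⊕ (A/J)` onto the C*-algebra generated by `π(A)` and
`U*U`. -/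
theorem extension_isomorphic_to_generated_algebra
    {A : Type*} [CStarAlgebra A]
    {B : Type*} [CStarAlgebra B] {C : Type*} [CStarAlgebra C]
    {H : Type*} [NormedAddCommGroup H] [InnerProductSpace ℂ H] [CompleteSpace H]
    (α : A →⋆ₐ[ℂ] A) (π : A →⋆ₐ[ℂ] (H →L[ℂ] H)) (U : H →L[ℂ] H)
    (hfaithful : Function.Injective π)
    (hcov : ∀ a : A, U * π a * star U = π (α a))
    (J : TwoSidedIdeal A)
    (hJ : (J : Set A) = {a : A | star U * U * π a = π a})
    (horth : {a : A | α a = 0} ∩ (J : Set A) = {0})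
    (qI : A →⋆ₐ[ℂ] B) (hqI : Function.Surjective qI)
    (hkerI : ∀ a : A, qI a = 0 ↔ α a = 0)
    (qJ : A →⋆ₐ[ℂ] C) (hqJ : Function.Surjective qJ)
    (hkerJ : ∀ a : A, qJ a = 0 ↔ a ∈ J) :
    ∃ Φ : (B × C) →⋆ₐ[ℂ] (H →L[ℂ] H),
      (∀ a b : A, Φ (qI a, qJ b) = star U * U * π a + (1 - star U * U) * π b) ∧
      Function.Injective Φ ∧
      (∀ x : B × C, ‖Φ x‖ = ‖x‖) ∧
      Set.range ⇑Φ =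
        ((StarAlgebra.adjoin ℂ (Set.range ⇑π ∪ {star U * U})).topologicalClosure :
          Set (H →L[ℂ] H)) :=
  extension_isomorphic_to_generated_algebra_general α π U hfaithful hcov J hJ qI hqI hkerI qJ hqJ
    hkerJ
end
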